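/- arXiv:0910.2358 — 12 statements merged into one kernel-verified Lean document; each statement's English description precedes it below -/
import Mathlib

section
/- Let T : A(X,E) → A(Y,F) be a linear bijection preserving common zeros between subspaces satisfying the standing properties. If f ∈ A(X,E) has Z(f) = {x₀} a singleton, then Z(Tf) contains exactly one point. -/
open Set

/-- The zero set of a function. -/
def Zset {X E : Type*} [Zero E] (f : X → E) : Set X := {x | f x = 0}

/-- The cozero set of a function. -/
def Coz {X E : Type*} [Zero E] (f : X → E) : Set X := {x | f x ≠ 0}

/-- The standing properties of the subspace `A ⊆ C(X,E)` and subring `R ⊆ C(X)`: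
`A` consists of continuous functions, contains a nowhere-vanishing function, is an
`R`-module under pointwise product, every singleton is the zero set of a member of `A`,
and `R` is a completely regular subring of `C(X)`. -/
structure StandingProps (𝕜 : Type*) [RCLike 𝕜] {X E : Type*} [MetricSpace X]
    [NormedAddCommGroup E] [NormedSpace 𝕜 E]
    (A : Submodule 𝕜 (X → E)) (R : Subring (X → 𝕜)) : Prop where
  cont_mem : ∀ f ∈ A, Continuous f
  cont_ring : ∀ φ ∈ R, Continuous φ
  nonvanishing : ∃ f ∈ A, ∀ x, f x ≠ 0
  smul_mem : ∀ φ ∈ R, ∀ f ∈ A, (fun x => φ x • f x) ∈ A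
  singleton_zero : ∀ x₀ : X, ∃ f ∈ A, Zset f = {x₀}
  completely_regular : ∀ (x₀ : X) (C : Set X), IsClosed C → x₀ ∉ C →
    ∃ φ ∈ R, φ x₀ = 1 ∧ ∀ x ∈ C, φ x = 0

theorem stmt1 {𝕜 X Y E F : Type*} [RCLike 𝕜] [MetricSpace X] [MetricSpace Y]
    [NormedAddCommGroup E] [NormedSpace 𝕜 E] [NormedAddCommGroup F] [NormedSpace 𝕜 F]
    (A : Submodule 𝕜 (X → E)) (RX : Subring (X → 𝕜))
    (B : Submodule 𝕜 (Y → F)) (RY : Subring (Y → 𝕜))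
    (hA : StandingProps 𝕜 A RX) (hB : StandingProps 𝕜 B RY)
    (T : A →ₗ[𝕜] B) (hbij : Function.Bijective T)
    (hpcz : ∀ f g : A, (Zset (f : X → E) ∩ Zset (g : X → E)).Nonempty ↔
      (Zset ((T f : B) : Y → F) ∩ Zset ((T g : B) : Y → F)).Nonempty) :
    ∀ (f : A) (x₀ : X), Zset (f : X → E) = {x₀} →
      ∃! y : Y, y ∈ Zset ((T f : B) : Y → F) := by
  intro f x₀ hf
  have key : ∀ y' : Y, y' ∈ Zset ((T f : B) : Y → F) →
      ∃ u : A, Zset ((T u : B) : Y → F) = {y'} ∧ (u : X → E) x₀ = 0 := by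
    intro y' hy'
    obtain ⟨g, hgB, hg⟩ := hB.singleton_zero y'
    obtain ⟨u, hu⟩ := hbij.2 ⟨g, hgB⟩
    have huz : Zset ((T u : B) : Y → F) = {y'} := by rw [hu]; exact hg
    refine ⟨u, huz, ?_⟩
    have hne : (Zset ((T f : B) : Y → F) ∩ Zset ((T u : B) : Y → F)).Nonempty := by
      refine ⟨y', hy', ?_⟩
      rw [huz]; rfl
    obtain ⟨x, hx1, hx2⟩ := (hpcz f u).mpr hne
    have hx : x = x₀ := by rw [hf] at hx1; exact hx1
    rwa [hx] at hx2
  have hex : (Zset ((T f : B) : Y → F)).Nonempty := by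
    have h1 : (Zset (f : X → E) ∩ Zset (f : X → E)).Nonempty := by
      rw [hf, Set.inter_self]; exact ⟨x₀, rfl⟩
    simpa [Set.inter_self] using (hpcz f f).mp h1
  obtain ⟨y₀, hy₀⟩ := hex
  refine ⟨y₀, hy₀, fun y hy => ?_⟩
  obtain ⟨u, hu, hux⟩ := key y hy
  obtain ⟨v, hv, hvx⟩ := key y₀ hy₀
  have h1 : (Zset (u : X → E) ∩ Zset (v : X → E)).Nonempty := ⟨x₀, hux, hvx⟩
  have h2 := (hpcz u v).mp h1
  rw [hu, hv] at h2
  obtain ⟨z, hz1, hz2⟩ := h2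
  exact hz1.symm.trans hz2
end

section
/- Let T : A(X,E) → A(Y,F) be a linear bijection preserving common zeros between subspaces satisfying the standing properties. If f₁, f₂ ∈ A(X,E) both have zero set equal to the same singleton {x₀}, then Z(Tf₁) = Z(Tf₂), and this common zero set is a singleton. -/
open Set

theorem stmt2 {𝕜 X Y E F : Type*} [RCLike 𝕜] [MetricSpace X] [MetricSpace Y]
    [NormedAddCommGroup E] [NormedSpace 𝕜 E] [NormedAddCommGroup F] [NormedSpace 𝕜 F]
    (A : Submodule 𝕜 (X → E)) (RX : Subring (X → 𝕜))
    (B : Submodule 𝕜 (Y → F)) (RY : Subring (Y → 𝕜))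
    (hA : StandingProps 𝕜 A RX) (hB : StandingProps 𝕜 B RY)
    (T : A →ₗ[𝕜] B) (hbij : Function.Bijective T)
    (hpcz : ∀ f g : A, (Zset (f : X → E) ∩ Zset (g : X → E)).Nonempty ↔
      (Zset ((T f : B) : Y → F) ∩ Zset ((T g : B) : Y → F)).Nonempty) :
    ∀ (f₁ f₂ : A) (x₀ : X), Zset (f₁ : X → E) = {x₀} → Zset (f₂ : X → E) = {x₀} →
      Zset ((T f₁ : B) : Y → F) = Zset ((T f₂ : B) : Y → F) ∧
        ∃ y₀ : Y, Zset ((T f₁ : B) : Y → F) = {y₀} := by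
  intro f₁ f₂ x₀ h₁ h₂
  -- helper: if Z(f) = {x₀} and Z(Tf) meets Z(Tg), then g x₀ = 0
  have gzero : ∀ (f g : A), Zset (f : X → E) = {x₀} →
      (Zset ((T f : B) : Y → F) ∩ Zset ((T g : B) : Y → F)).Nonempty →
      (g : X → E) x₀ = 0 := by
    intro f g hf hne
    obtain ⟨x, hx1, hx2⟩ := (hpcz f g).mpr hne
    have hx : x = x₀ := by
      have : x ∈ ({x₀} : Set X) := hf ▸ hx1
      simpa using this
    exact hx ▸ hx2
  -- main inclusion
  have main : ∀ f g : A, Zset (f : X → E) = {x₀} → Zset (g : X → E) = {x₀} →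
      Zset ((T f : B) : Y → F) ⊆ Zset ((T g : B) : Y → F) := by
    intro f g hf hg y hy
    obtain ⟨h, hmem, hZ⟩ := hB.singleton_zero y
    obtain ⟨u, hu⟩ := hbij.2 ⟨h, hmem⟩
    have hyh : ((T u : B) : Y → F) y = 0 := by
      rw [hu]
      have : y ∈ Zset h := hZ ▸ rfl
      exact this
    have hu0 : (u : X → E) x₀ = 0 := gzero f u hf ⟨y, hy, hyh⟩
    have hne : (Zset (g : X → E) ∩ Zset (u : X → E)).Nonempty :=
      ⟨x₀, by rw [hg]; rfl, hu0⟩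
    obtain ⟨y', hy1, hy2⟩ := (hpcz g u).mp hne
    have : y' = y := by
      rw [hu] at hy2
      have : y' ∈ ({y} : Set Y) := hZ ▸ hy2
      simpa using this
    exact this ▸ hy1
  have heq : Zset ((T f₁ : B) : Y → F) = Zset ((T f₂ : B) : Y → F) :=
    Set.Subset.antisymm (main f₁ f₂ h₁ h₂) (main f₂ f₁ h₂ h₁)
  refine ⟨heq, ?_⟩
  -- nonempty
  obtain ⟨y₀, hy₀, -⟩ := (hpcz f₁ f₁).mp ⟨x₀, by rw [h₁]; exact ⟨rfl, rfl⟩⟩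
  refine ⟨y₀, Set.eq_singleton_iff_unique_mem.mpr ⟨hy₀, ?_⟩⟩
  intro y hy
  obtain ⟨h, hmem, hZ⟩ := hB.singleton_zero y
  obtain ⟨u, hu⟩ := hbij.2 ⟨h, hmem⟩
  obtain ⟨h₀', hmem₀, hZ₀⟩ := hB.singleton_zero y₀
  obtain ⟨u₀, hu₀⟩ := hbij.2 ⟨h₀', hmem₀⟩
  have hyh : ((T u : B) : Y → F) y = 0 := by
    rw [hu]; exact (hZ ▸ rfl : y ∈ Zset h)
  have hyh₀ : ((T u₀ : B) : Y → F) y₀ = 0 := by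
    rw [hu₀]; exact (hZ₀ ▸ rfl : y₀ ∈ Zset h₀')
  have hu0 : (u : X → E) x₀ = 0 := gzero f₁ u h₁ ⟨y, hy, hyh⟩
  have hu₀0 : (u₀ : X → E) x₀ = 0 := gzero f₁ u₀ h₁ ⟨y₀, hy₀, hyh₀⟩
  obtain ⟨y', hy1, hy2⟩ := (hpcz u u₀).mp ⟨x₀, hu0, hu₀0⟩
  rw [hu] at hy1; rw [hu₀] at hy2
  have e1 : y' = y := by
    have : y' ∈ ({y} : Set Y) := hZ ▸ hy1
    simpa using this
  have e2 : y' = y₀ := by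
    have : y' ∈ ({y₀} : Set Y) := hZ₀ ▸ hy2
    simpa using this
  rw [← e1, e2]
end

section
/- Let T : A(X,E) → A(Y,F) be a linear bijection preserving common zeros between subspaces satisfying the standing properties, and let k : X → Y be the induced map sending each x ∈ X to the unique point y ∈ Y with Z(Tf_x) = {y}, where Z(f_x) = {x}. Then for every f ∈ A(X,E) and x₀ ∈ X with f(x₀) = 0, one has Tf(k(x₀)) = 0. -/
open Set

theorem stmt3 {𝕜 X Y E F : Type*} [RCLike 𝕜] [MetricSpace X] [MetricSpace Y]
    [NormedAddCommGroup E] [NormedSpace 𝕜 E] [NormedAddCommGroup F] [NormedSpace 𝕜 F]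
    (A : Submodule 𝕜 (X → E)) (RX : Subring (X → 𝕜))
    (B : Submodule 𝕜 (Y → F)) (RY : Subring (Y → 𝕜))
    (hA : StandingProps 𝕜 A RX) (hB : StandingProps 𝕜 B RY)
    (T : A →ₗ[𝕜] B) (hbij : Function.Bijective T)
    (hpcz : ∀ f g : A, (Zset (f : X → E) ∩ Zset (g : X → E)).Nonempty ↔
      (Zset ((T f : B) : Y → F) ∩ Zset ((T g : B) : Y → F)).Nonempty)
    (k : X → Y)
    (hk : ∀ (x : X) (f : A), Zset (f : X → E) = {x} →
      Zset ((T f : B) : Y → F) = {k x}) :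
    ∀ (f : A) (x₀ : X), (f : X → E) x₀ = 0 → ((T f : B) : Y → F) (k x₀) = 0 := by
  intro f x₀ hf
  obtain ⟨g, hgA, hgz⟩ := hA.singleton_zero x₀
  have hne : (Zset (f : X → E) ∩ Zset ((⟨g, hgA⟩ : A) : X → E)).Nonempty := by
    refine ⟨x₀, hf, ?_⟩
    show x₀ ∈ Zset g
    rw [hgz]; rfl
  obtain ⟨y, hyf, hyg⟩ := (hpcz f ⟨g, hgA⟩).mp hne
  have hZ := hk x₀ ⟨g, hgA⟩ hgz
  rw [hZ] at hyg
  rw [← hyg]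
  exact hyf
end

section
/- Let T : A(X,E) → A(Y,F) be a linear bijection preserving common zeros between subspaces satisfying the standing properties. Let k : X → Y be the map induced by T and h : Y → X the map induced by T⁻¹ (each defined via singleton zero sets). Then k ∘ h = id_Y and h ∘ k = id_X; in particular h is a bijection with inverse k. -/
open Set

theorem stmt4 {𝕜 X Y E F : Type*} [RCLike 𝕜] [MetricSpace X] [MetricSpace Y]
    [NormedAddCommGroup E] [NormedSpace 𝕜 E] [NormedAddCommGroup F] [NormedSpace 𝕜 F]
    (A : Submodule 𝕜 (X → E)) (RX : Subring (X → 𝕜))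
    (B : Submodule 𝕜 (Y → F)) (RY : Subring (Y → 𝕜))
    (hA : StandingProps 𝕜 A RX) (hB : StandingProps 𝕜 B RY)
    (T : A →ₗ[𝕜] B) (hbij : Function.Bijective T)
    (hpcz : ∀ f g : A, (Zset (f : X → E) ∩ Zset (g : X → E)).Nonempty ↔
      (Zset ((T f : B) : Y → F) ∩ Zset ((T g : B) : Y → F)).Nonempty)
    (k : X → Y)
    (hk : ∀ (x : X) (f : A), Zset (f : X → E) = {x} →
      Zset ((T f : B) : Y → F) = {k x})
    (h : Y → X)
    (hh : ∀ (y : Y) (g : B) (f : A), T f = g → Zset (g : Y → F) = {y} →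
      Zset (f : X → E) = {h y}) :
    k ∘ h = id ∧ h ∘ k = id := by
  constructor
  · funext y
    obtain ⟨g, hgB, hgZ⟩ := hB.singleton_zero y
    obtain ⟨f, hf⟩ := hbij.2 ⟨g, hgB⟩
    have hfZ := hh y ⟨g, hgB⟩ f hf hgZ
    have := hk (h y) f hfZ
    rw [hf] at this
    simp only [Function.comp_apply, id_eq]
    have : ({y} : Set Y) = {k (h y)} := hgZ ▸ this
    exact (Set.singleton_eq_singleton_iff.mp this.symm)
  · funext x
    obtain ⟨f, hfA, hfZ⟩ := hA.singleton_zero x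
    have hTf := hk x ⟨f, hfA⟩ hfZ
    have := hh (k x) (T ⟨f, hfA⟩) ⟨f, hfA⟩ rfl hTf
    simp only [Function.comp_apply, id_eq]
    have : ({x} : Set X) = {h (k x)} := hfZ ▸ this
    exact (Set.singleton_eq_singleton_iff.mp this.symm)
end

section
/- Let T : A(X,E) → A(Y,F) be a linear bijection preserving common zeros between subspaces satisfying the standing properties. Then the induced map h : Y → X (defined via T⁻¹ on singleton zero sets) is a homeomorphism. -/
open Set

theorem stmt5 {𝕜 X Y E F : Type*} [RCLike 𝕜] [MetricSpace X] [MetricSpace Y]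
    [NormedAddCommGroup E] [NormedSpace 𝕜 E] [NormedAddCommGroup F] [NormedSpace 𝕜 F]
    (A : Submodule 𝕜 (X → E)) (RX : Subring (X → 𝕜))
    (B : Submodule 𝕜 (Y → F)) (RY : Subring (Y → 𝕜))
    (hA : StandingProps 𝕜 A RX) (hB : StandingProps 𝕜 B RY)
    (T : A →ₗ[𝕜] B) (hbij : Function.Bijective T)
    (hpcz : ∀ f g : A, (Zset (f : X → E) ∩ Zset (g : X → E)).Nonempty ↔
      (Zset ((T f : B) : Y → F) ∩ Zset ((T g : B) : Y → F)).Nonempty)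
    (h : Y → X)
    (hh : ∀ (y : Y) (g : B) (f : A), T f = g → Zset (g : Y → F) = {y} →
      Zset (f : X → E) = {h y}) :
    IsHomeomorph h := by
  classical
  -- Key pointwise fact: (T f) y = 0 ↔ f (h y) = 0
  have key : ∀ (f : A) (y : Y), ((T f : B) : Y → F) y = 0 ↔ (f : X → E) (h y) = 0 := by
    intro f y
    obtain ⟨g, hgB, hgZ⟩ := hB.singleton_zero y
    obtain ⟨f', hf'⟩ := hbij.2 ⟨g, hgB⟩
    have hZf' : Zset (f' : X → E) = {h y} := hh y ⟨g, hgB⟩ f' hf' hgZ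
    have h1 := hpcz f f'
    constructor
    · intro h0
      have hne : (Zset ((T f : B) : Y → F) ∩ Zset ((T f' : B) : Y → F)).Nonempty := by
        refine ⟨y, h0, ?_⟩
        rw [hf']
        show (g : Y → F) y = 0
        have : y ∈ Zset (g : Y → F) := by rw [hgZ]; rfl
        exact this
      obtain ⟨x, hx1, hx2⟩ := h1.mpr hne
      rw [hZf', mem_singleton_iff] at hx2
      rw [← hx2]; exact hx1
    · intro h0
      have hne : (Zset (f : X → E) ∩ Zset (f' : X → E)).Nonempty := by
        refine ⟨h y, h0, ?_⟩
        rw [hZf']; rfl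
      obtain ⟨y', hy1, hy2⟩ := h1.mp hne
      rw [hf'] at hy2
      have : y' ∈ Zset (g : Y → F) := hy2
      rw [hgZ, mem_singleton_iff] at this
      rw [← this]; exact hy1
  -- h is bijective
  have hinj : Function.Injective h := by
    intro y₁ y₂ hyy
    obtain ⟨g₁, hg₁B, hg₁Z⟩ := hB.singleton_zero y₁
    obtain ⟨f₁, hf₁⟩ := hbij.2 ⟨g₁, hg₁B⟩
    have hZf₁ : Zset (f₁ : X → E) = {h y₁} := hh y₁ ⟨g₁, hg₁B⟩ f₁ hf₁ hg₁Z
    have hz : (f₁ : X → E) (h y₂) = 0 := by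
      have : h y₂ ∈ Zset (f₁ : X → E) := by rw [hZf₁, mem_singleton_iff]; exact hyy.symm
      exact this
    have hTz : ((T f₁ : B) : Y → F) y₂ = 0 := (key f₁ y₂).mpr hz
    rw [hf₁] at hTz
    have : y₂ ∈ Zset (g₁ : Y → F) := hTz
    rw [hg₁Z, mem_singleton_iff] at this
    exact this.symm
  have hsurj : Function.Surjective h := by
    intro x
    obtain ⟨f, hfA, hfZ⟩ := hA.singleton_zero x
    have hne : (Zset (f : X → E) ∩ Zset (f : X → E)).Nonempty := by
      refine ⟨x, ?_, ?_⟩ <;> · show x ∈ Zset f; rw [hfZ]; rfl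
    obtain ⟨y, hy, -⟩ := (hpcz ⟨f, hfA⟩ ⟨f, hfA⟩).mp hne
    have : (f : X → E) (h y) = 0 := (key ⟨f, hfA⟩ y).mp hy
    have : h y ∈ Zset f := this
    rw [hfZ, mem_singleton_iff] at this
    exact ⟨y, this⟩
  have hbij_h : Function.Bijective h := ⟨hinj, hsurj⟩
  set e : Y ≃ X := Equiv.ofBijective h hbij_h with he
  have he_app : ∀ y, e y = h y := fun _ => rfl
  have keyk : ∀ (f : A) (x : X), (f : X → E) x = 0 ↔ ((T f : B) : Y → F) (e.symm x) = 0 := by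
    intro f x
    rw [key f (e.symm x)]
    have : h (e.symm x) = x := e.apply_symm_apply x
    rw [this]
  -- continuity of h
  have cont_h : Continuous h := by
    apply SeqContinuous.continuous
    intro ys y₀ hys
    by_contra hc
    rw [Metric.tendsto_atTop] at hc
    push_neg at hc
    obtain ⟨ε, hε, hfreq⟩ := hc
    obtain ⟨u₀, hu₀A, hu₀⟩ := hA.nonvanishing
    have hCcl : IsClosed {x : X | ε ≤ dist x (h y₀)} :=
      isClosed_le continuous_const (continuous_id.dist continuous_const)
    have hx₀C : h y₀ ∉ {x : X | ε ≤ dist x (h y₀)} := by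
      simp [dist_self, hε.not_ge]
    obtain ⟨φ, hφR, hφ1, hφ0⟩ := hA.completely_regular (h y₀) _ hCcl hx₀C
    set fA : A := ⟨fun x => φ x • u₀ x, hA.smul_mem φ hφR u₀ hu₀A⟩ with hfA
    have hf0 : ∀ x, ε ≤ dist x (h y₀) → (fA : X → E) x = 0 := by
      intro x hx
      show φ x • u₀ x = 0
      rw [hφ0 x hx, zero_smul]
    have hfy₀ : (fA : X → E) (h y₀) ≠ 0 := by
      show φ (h y₀) • u₀ (h y₀) ≠ 0
      rw [hφ1, one_smul]; exact hu₀ _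
    have hTcont : Continuous ((T fA : B) : Y → F) := hB.cont_mem _ (T fA).2
    have htend : Filter.Tendsto (fun n => ((T fA : B) : Y → F) (ys n)) Filter.atTop
        (nhds (((T fA : B) : Y → F) y₀)) := (hTcont.tendsto y₀).comp hys
    have hne0 : ((T fA : B) : Y → F) y₀ ≠ 0 := fun hz => hfy₀ ((key fA y₀).mp hz)
    have hev := htend.eventually_ne hne0
    rw [Filter.eventually_atTop] at hev
    obtain ⟨N, hN⟩ := hev
    obtain ⟨n, hnN, hdist⟩ := hfreq N
    have : ((T fA : B) : Y → F) (ys n) = 0 :=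
      (key fA (ys n)).mpr (hf0 _ hdist)
    exact hN n hnN this
  -- continuity of the inverse
  have cont_k : Continuous (e.symm : X → Y) := by
    apply SeqContinuous.continuous
    intro xs x₀ hxs
    by_contra hc
    rw [Metric.tendsto_atTop] at hc
    push_neg at hc
    obtain ⟨ε, hε, hfreq⟩ := hc
    obtain ⟨v₀, hv₀B, hv₀⟩ := hB.nonvanishing
    have hCcl : IsClosed {y : Y | ε ≤ dist y (e.symm x₀)} :=
      isClosed_le continuous_const (continuous_id.dist continuous_const)
    have hy₀C : e.symm x₀ ∉ {y : Y | ε ≤ dist y (e.symm x₀)} := by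
      simp [dist_self, hε.not_ge]
    obtain ⟨ψ, hψR, hψ1, hψ0⟩ := hB.completely_regular (e.symm x₀) _ hCcl hy₀C
    set gB : B := ⟨fun y => ψ y • v₀ y, hB.smul_mem ψ hψR v₀ hv₀B⟩ with hgB
    obtain ⟨fA, hTfA⟩ := hbij.2 gB
    have hg0 : ∀ y, ε ≤ dist y (e.symm x₀) → (gB : Y → F) y = 0 := by
      intro y hy
      show ψ y • v₀ y = 0
      rw [hψ0 y hy, zero_smul]
    have hgy₀ : (gB : Y → F) (e.symm x₀) ≠ 0 := by
      show ψ (e.symm x₀) • v₀ (e.symm x₀) ≠ 0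
      rw [hψ1, one_smul]; exact hv₀ _
    have hfcont : Continuous (fA : X → E) := hA.cont_mem _ fA.2
    have htend : Filter.Tendsto (fun n => (fA : X → E) (xs n)) Filter.atTop
        (nhds ((fA : X → E) x₀)) := (hfcont.tendsto x₀).comp hxs
    have hne0 : (fA : X → E) x₀ ≠ 0 := by
      intro hz
      have := (keyk fA x₀).mp hz
      rw [hTfA] at this
      exact hgy₀ this
    have hev := htend.eventually_ne hne0
    rw [Filter.eventually_atTop] at hev
    obtain ⟨N, hN⟩ := hev
    obtain ⟨n, hnN, hdist⟩ := hfreq N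
    have hz : ((T fA : B) : Y → F) (e.symm (xs n)) = 0 := by
      rw [hTfA]; exact hg0 _ hdist
    exact hN n hnN ((keyk fA (xs n)).mpr hz)
  exact Homeomorph.isHomeomorph ⟨e, cont_h, cont_k⟩
end

section
/- Let T : A(X,E) → A(Y,F) be a linear bijection preserving common zeros between subspaces satisfying the standing properties, and h : Y → X the induced homeomorphism. For y ∈ Y define E_y = {f(h(y)) : f ∈ A(X,E)} ⊆ E and F_y = {g(y) : g ∈ A(Y,F)} ⊆ F. Then for each y ∈ Y, the map J_y : E_y → F_y, defined by J_y(e) = Tf(y) for any f ∈ A(X,E) with f(h(y)) = e, is well-defined (independent of the choice of f). -/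
open Set

theorem stmt6 {𝕜 X Y E F : Type*} [RCLike 𝕜] [MetricSpace X] [MetricSpace Y]
    [NormedAddCommGroup E] [NormedSpace 𝕜 E] [NormedAddCommGroup F] [NormedSpace 𝕜 F]
    (A : Submodule 𝕜 (X → E)) (RX : Subring (X → 𝕜))
    (B : Submodule 𝕜 (Y → F)) (RY : Subring (Y → 𝕜))
    (hA : StandingProps 𝕜 A RX) (hB : StandingProps 𝕜 B RY)
    (T : A →ₗ[𝕜] B) (hbij : Function.Bijective T)
    (hpcz : ∀ f g : A, (Zset (f : X → E) ∩ Zset (g : X → E)).Nonempty ↔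
      (Zset ((T f : B) : Y → F) ∩ Zset ((T g : B) : Y → F)).Nonempty)
    (h : Y → X)
    (hh : ∀ (y : Y) (g : B) (f : A), T f = g → Zset (g : Y → F) = {y} →
      Zset (f : X → E) = {h y}) :
    ∀ (y : Y) (f g : A), (f : X → E) (h y) = (g : X → E) (h y) →
      ((T f : B) : Y → F) y = ((T g : B) : Y → F) y := by
  -- Key: if d (h y) = 0 then (T d) y = 0
  have key : ∀ (y : Y) (d : A), (d : X → E) (h y) = 0 → ((T d : B) : Y → F) y = 0 := by
    intro y d hd
    obtain ⟨g₀, hg₀B, hg₀Z⟩ := hB.singleton_zero y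
    obtain ⟨f₀, hf₀⟩ := hbij.2 ⟨g₀, hg₀B⟩
    have hZf₀ : Zset (f₀ : X → E) = {h y} := hh y ⟨g₀, hg₀B⟩ f₀ hf₀ hg₀Z
    have hne : (Zset (d : X → E) ∩ Zset (f₀ : X → E)).Nonempty := by
      refine ⟨h y, hd, ?_⟩
      rw [hZf₀]; rfl
    obtain ⟨z, hz1, hz2⟩ := (hpcz d f₀).mp hne
    have : z = y := by
      have : z ∈ Zset (g₀ : Y → F) := by rw [hf₀] at hz2; exact hz2
      rwa [hg₀Z] at this
    rw [← this]; exact hz1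
  intro y f g hfg
  have hd : ((f - g : A) : X → E) (h y) = 0 := by
    simp [sub_eq_zero, hfg]
  have := key y (f - g) hd
  rw [map_sub] at this
  have : ((T f : B) : Y → F) y - ((T g : B) : Y → F) y = 0 := this
  exact sub_eq_zero.mp this
end

section
/- Let T : A(X,E) → A(Y,F) be a linear bijection preserving common zeros between subspaces satisfying the standing properties, with induced homeomorphism h : Y → X. Then for each y ∈ Y, the map J_y : E_y → F_y given by J_y(f(h(y))) = Tf(y) is a linear bijection. -/
open Set

theorem stmt7 {𝕜 X Y E F : Type*} [RCLike 𝕜] [MetricSpace X] [MetricSpace Y]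
    [NormedAddCommGroup E] [NormedSpace 𝕜 E] [NormedAddCommGroup F] [NormedSpace 𝕜 F]
    (A : Submodule 𝕜 (X → E)) (RX : Subring (X → 𝕜))
    (B : Submodule 𝕜 (Y → F)) (RY : Subring (Y → 𝕜))
    (hA : StandingProps 𝕜 A RX) (hB : StandingProps 𝕜 B RY)
    (T : A →ₗ[𝕜] B) (hbij : Function.Bijective T)
    (hpcz : ∀ f g : A, (Zset (f : X → E) ∩ Zset (g : X → E)).Nonempty ↔
      (Zset ((T f : B) : Y → F) ∩ Zset ((T g : B) : Y → F)).Nonempty)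
    (h : Y → X)
    (hh : ∀ (y : Y) (g : B) (f : A), T f = g → Zset (g : Y → F) = {y} →
      Zset (f : X → E) = {h y}) :
    ∀ y : Y, ∃ J : (A.map (LinearMap.proj (h y) : (X → E) →ₗ[𝕜] E)) ≃ₗ[𝕜]
        (B.map (LinearMap.proj y : (Y → F) →ₗ[𝕜] F)),
      ∀ f : A, (J ⟨(f : X → E) (h y), Submodule.mem_map_of_mem f.2⟩ : F) =
        ((T f : B) : Y → F) y := by
  intro y
  obtain ⟨g0, hg0B, hg0z⟩ := hB.singleton_zero y
  obtain ⟨f0, hf0⟩ := hbij.surjective ⟨g0, hg0B⟩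
  have hzf0 : Zset (f0 : X → E) = {h y} := hh y ⟨g0, hg0B⟩ f0 hf0 hg0z
  have key : ∀ f : A, (f : X → E) (h y) = 0 ↔ ((T f : B) : Y → F) y = 0 := by
    intro f
    constructor
    · intro hf
      have h1 : (Zset (f : X → E) ∩ Zset (f0 : X → E)).Nonempty :=
        ⟨h y, hf, by rw [hzf0]; rfl⟩
      obtain ⟨y', hy1, hy2⟩ := (hpcz f f0).mp h1
      have hy' : y' = y := by
        rw [hf0] at hy2
        have : y' ∈ Zset g0 := hy2
        rwa [hg0z] at this
      subst hy'; exact hy1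
    · intro hf
      have h1 : (Zset ((T f : B) : Y → F) ∩ Zset ((T f0 : B) : Y → F)).Nonempty := by
        refine ⟨y, hf, ?_⟩
        rw [hf0]
        show y ∈ Zset g0
        rw [hg0z]; rfl
      obtain ⟨x, hx1, hx2⟩ := (hpcz f f0).mpr h1
      have hx : x = h y := by rw [hzf0] at hx2; exact hx2
      subst hx; exact hx1
  set p1 : A →ₗ[𝕜] E := (LinearMap.proj (h y)).comp A.subtype with hp1
  set p2 : A →ₗ[𝕜] F := (LinearMap.proj y).comp (B.subtype.comp T) with hp2
  have hker : LinearMap.ker p1 = LinearMap.ker p2 := by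
    ext f
    simp only [LinearMap.mem_ker, hp1, hp2, LinearMap.comp_apply]
    exact key f
  have hr1 : LinearMap.range p1 = A.map (LinearMap.proj (h y)) := by
    rw [hp1, LinearMap.range_comp, Submodule.range_subtype]
  have hr2 : LinearMap.range p2 = B.map (LinearMap.proj y) := by
    rw [hp2, LinearMap.range_comp, LinearMap.range_comp,
      LinearMap.range_eq_top.mpr hbij.surjective, Submodule.map_top,
      Submodule.range_subtype]
  refine ⟨(LinearEquiv.ofEq _ _ hr1.symm).trans
    ((p1.quotKerEquivRange).symm.trans ((Submodule.quotEquivOfEq _ _ hker).trans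
    ((p2.quotKerEquivRange).trans (LinearEquiv.ofEq _ _ hr2)))), ?_⟩
  intro f
  have e1 : (LinearEquiv.ofEq _ _ hr1.symm)
      ⟨(f : X → E) (h y), Submodule.mem_map_of_mem f.2⟩
      = ⟨p1 f, LinearMap.mem_range_self p1 f⟩ := rfl
  have e2 : (p1.quotKerEquivRange).symm ⟨p1 f, LinearMap.mem_range_self p1 f⟩
      = Submodule.Quotient.mk f := by
    rw [LinearEquiv.symm_apply_eq]
    exact Subtype.ext (p1.quotKerEquivRange_apply_mk f).symm
  simp only [LinearEquiv.trans_apply, e1, e2, Submodule.quotEquivOfEq_mk]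
  have e3 : ((LinearEquiv.ofEq _ _ hr2)
      (p2.quotKerEquivRange (Submodule.Quotient.mk f)) : F)
      = p2 f := p2.quotKerEquivRange_apply_mk f
  rw [e3]
  rfl
end

section
/- Let T : A(X,E) → A(Y,F) be a linear bijection preserving common zeros between subspaces satisfying the standing properties. Then there exist a homeomorphism h : Y → X and, for each y ∈ Y, linear bijections J_y : E_y → F_y between subspaces E_y ⊆ E and F_y ⊆ F, such that Tf(y) = J_y(f(h(y))) for all f ∈ A(X,E) and all y ∈ Y. -/
open Set

section aux

variable {𝕜 : Type*} [RCLike 𝕜] {X Y E F : Type*}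
  [NormedAddCommGroup E] [NormedSpace 𝕜 E] [NormedAddCommGroup F] [NormedSpace 𝕜 F]
  {A : Submodule 𝕜 (X → E)} {B : Submodule 𝕜 (Y → F)}

lemma rel_exists (e : A ≃ₗ[𝕜] B)
    (hAz : ∀ x₀ : X, ∃ f ∈ A, Zset f = {x₀})
    (hBz : ∀ y₀ : Y, ∃ g ∈ B, Zset g = {y₀})
    (hpcz : ∀ f g : A, (Zset (f : X → E) ∩ Zset (g : X → E)).Nonempty ↔
      (Zset ((e f : B) : Y → F) ∩ Zset ((e g : B) : Y → F)).Nonempty)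
    (y : Y) : ∃ x : X, ∀ f : A, ((f : X → E) x = 0 ↔ ((e f : B) : Y → F) y = 0) := by
  obtain ⟨g, hgB, hgz⟩ := hBz y
  set f₀ : A := e.symm ⟨g, hgB⟩ with hf₀
  have hef₀ : ((e f₀ : B) : Y → F) = g := by rw [hf₀, e.apply_symm_apply]
  have hzero : Zset ((e f₀ : B) : Y → F) = {y} := by rw [hef₀]; exact hgz
  have hne : (Zset (f₀ : X → E)).Nonempty := by
    have := (hpcz f₀ f₀).mpr (by rw [hzero]; exact ⟨y, rfl, rfl⟩)
    simpa [Set.inter_self] using this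
  obtain ⟨x, hx⟩ := hne
  have hsing : Zset (f₀ : X → E) = {x} := by
    ext x'
    simp only [Set.mem_singleton_iff]
    constructor
    · intro hx'
      obtain ⟨F₁, hF₁A, hF₁z⟩ := hAz x
      obtain ⟨F₂, hF₂A, hF₂z⟩ := hAz x'
      have hxF₁ : x ∈ Zset F₁ := by rw [hF₁z]; rfl
      have hx'F₂ : x' ∈ Zset F₂ := by rw [hF₂z]; rfl
      have h1 : ((e ⟨F₁, hF₁A⟩ : B) : Y → F) y = 0 := by
        obtain ⟨y', hy'1, hy'2⟩ := (hpcz ⟨F₁, hF₁A⟩ f₀).mp ⟨x, hxF₁, hx⟩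
        rw [hzero, Set.mem_singleton_iff] at hy'2
        rw [← hy'2]
        exact hy'1
      have h2 : ((e ⟨F₂, hF₂A⟩ : B) : Y → F) y = 0 := by
        obtain ⟨y', hy'1, hy'2⟩ := (hpcz ⟨F₂, hF₂A⟩ f₀).mp ⟨x', hx'F₂, hx'⟩
        rw [hzero, Set.mem_singleton_iff] at hy'2
        rw [← hy'2]
        exact hy'1
      obtain ⟨x'', hx''1, hx''2⟩ := (hpcz ⟨F₁, hF₁A⟩ ⟨F₂, hF₂A⟩).mpr ⟨y, h1, h2⟩
      have e1 : x'' = x := by rw [show Zset ((⟨F₁, hF₁A⟩ : A) : X → E) = {x} from hF₁z] at hx''1; exact hx''1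
      have e2 : x'' = x' := by rw [show Zset ((⟨F₂, hF₂A⟩ : A) : X → E) = {x'} from hF₂z] at hx''2; exact hx''2
      rw [← e1, ← e2]
    · intro hxx
      rw [hxx]
      exact hx
  refine ⟨x, fun f => ⟨fun hfx => ?_, fun hefy => ?_⟩⟩
  · obtain ⟨y', hy'1, hy'2⟩ := (hpcz f f₀).mp ⟨x, hfx, hx⟩
    rw [hzero] at hy'2
    rwa [hy'2] at hy'1
  · obtain ⟨x', hx'1, hx'2⟩ := (hpcz f f₀).mpr ⟨y, hefy, by rw [hzero]; rfl⟩
    rw [hsing] at hx'2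
    rwa [hx'2] at hx'1

lemma rel_unique (e : A ≃ₗ[𝕜] B)
    (hAz : ∀ x₀ : X, ∃ f ∈ A, Zset f = {x₀})
    {x₁ x₂ : X} {y : Y}
    (h1 : ∀ f : A, ((f : X → E) x₁ = 0 ↔ ((e f : B) : Y → F) y = 0))
    (h2 : ∀ f : A, ((f : X → E) x₂ = 0 ↔ ((e f : B) : Y → F) y = 0)) :
    x₁ = x₂ := by
  obtain ⟨f, hfA, hfz⟩ := hAz x₁
  have hx1 : ((⟨f, hfA⟩ : A) : X → E) x₁ = 0 := (hfz ▸ rfl : x₁ ∈ Zset f)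
  have := (h2 ⟨f, hfA⟩).mpr ((h1 ⟨f, hfA⟩).mp hx1)
  have : x₂ ∈ Zset f := this
  rw [hfz] at this
  exact this.symm

lemma cont_of_rel [MetricSpace X] [MetricSpace Y] {RX : Subring (X → 𝕜)}
    (hsmul : ∀ φ ∈ RX, ∀ f ∈ A, (fun x => φ x • f x) ∈ A)
    (hnv : ∃ f ∈ A, ∀ x, f x ≠ 0)
    (hcr : ∀ (x₀ : X) (C : Set X), IsClosed C → x₀ ∉ C →
      ∃ φ ∈ RX, φ x₀ = 1 ∧ ∀ x ∈ C, φ x = 0)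
    (hBcont : ∀ g ∈ B, Continuous g)
    (e : A ≃ₗ[𝕜] B) (h : Y → X)
    (hRel : ∀ y (f : A), ((f : X → E) (h y) = 0 ↔ ((e f : B) : Y → F) y = 0)) :
    Continuous h := by
  rw [Metric.continuous_iff]
  intro y ε hε
  obtain ⟨u, huA, hu⟩ := hnv
  have hC : IsClosed {x : X | ε ≤ dist x (h y)} :=
    isClosed_le continuous_const (continuous_id.dist continuous_const)
  have hnotC : h y ∉ {x : X | ε ≤ dist x (h y)} := by
    simp only [Set.mem_setOf_eq, dist_self, not_le]; exact hε
  obtain ⟨φ, hφR, hφ1, hφ0⟩ := hcr (h y) _ hC hnotC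
  set f : A := ⟨fun x => φ x • u x, hsmul φ hφR u huA⟩ with hf
  have hgc : Continuous ((e f : B) : Y → F) := hBcont _ (e f).2
  have hgy : ((e f : B) : Y → F) y ≠ 0 := by
    intro hcon
    have := (hRel y f).mpr hcon
    rw [hf] at this
    simp only [hφ1, one_smul] at this
    exact hu (h y) this
  have hopen : IsOpen (((e f : B) : Y → F) ⁻¹' {0}ᶜ) := (isOpen_compl_singleton).preimage hgc
  obtain ⟨δ, hδ, hball⟩ := Metric.isOpen_iff.mp hopen y hgy
  refine ⟨δ, hδ, fun a ha => ?_⟩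
  have hga : ((e f : B) : Y → F) a ≠ 0 := hball (by rwa [Metric.mem_ball])
  have hfa : ((f : X → E)) (h a) ≠ 0 := fun hcon => hga ((hRel a f).mp hcon)
  have hφa : φ (h a) ≠ 0 := by
    intro hcon
    apply hfa
    rw [hf]
    simp [hcon]
  by_contra hcon
  push_neg at hcon
  exact hφa (hφ0 (h a) hcon)

end aux

theorem stmt8 {𝕜 X Y E F : Type*} [RCLike 𝕜] [MetricSpace X] [MetricSpace Y]
    [NormedAddCommGroup E] [NormedSpace 𝕜 E] [NormedAddCommGroup F] [NormedSpace 𝕜 F]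
    (A : Submodule 𝕜 (X → E)) (RX : Subring (X → 𝕜))
    (B : Submodule 𝕜 (Y → F)) (RY : Subring (Y → 𝕜))
    (hA : StandingProps 𝕜 A RX) (hB : StandingProps 𝕜 B RY)
    (T : A →ₗ[𝕜] B) (hbij : Function.Bijective T)
    (hpcz : ∀ f g : A, (Zset (f : X → E) ∩ Zset (g : X → E)).Nonempty ↔
      (Zset ((T f : B) : Y → F) ∩ Zset ((T g : B) : Y → F)).Nonempty) :
    ∃ h : Y → X, IsHomeomorph h ∧
      ∀ y : Y, ∃ J : (A.map (LinearMap.proj (h y) : (X → E) →ₗ[𝕜] E)) ≃ₗ[𝕜]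
          (B.map (LinearMap.proj y : (Y → F) →ₗ[𝕜] F)),
        ∀ f : A, ((T f : B) : Y → F) y =
          (J ⟨(f : X → E) (h y), Submodule.mem_map_of_mem f.2⟩ : F) := by
  classical
  set e : A ≃ₗ[𝕜] B := LinearEquiv.ofBijective T hbij with he
  have hpcz' : ∀ f g : A, (Zset (f : X → E) ∩ Zset (g : X → E)).Nonempty ↔
      (Zset ((e f : B) : Y → F) ∩ Zset ((e g : B) : Y → F)).Nonempty := hpcz
  have hex : ∀ y, ∃ x, ∀ f : A, ((f : X → E) x = 0 ↔ ((e f : B) : Y → F) y = 0) :=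
    rel_exists e hA.singleton_zero hB.singleton_zero hpcz'
  choose h hRel using hex
  have hpcz'' : ∀ p q : B, (Zset (p : Y → F) ∩ Zset (q : Y → F)).Nonempty ↔
      (Zset ((e.symm p : A) : X → E) ∩ Zset ((e.symm q : A) : X → E)).Nonempty := by
    intro p q
    have := (hpcz' (e.symm p) (e.symm q)).symm
    simpa using this
  have kex : ∀ x, ∃ y, ∀ g : B, ((g : Y → F) y = 0 ↔ ((e.symm g : A) : X → E) x = 0) :=
    rel_exists e.symm hB.singleton_zero hA.singleton_zero hpcz''
  choose k hRelk using kex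
  have hRelk' : ∀ x (f : A), ((f : X → E) x = 0 ↔ ((e f : B) : Y → F) (k x) = 0) := by
    intro x f
    have := hRelk x (e f)
    rw [e.symm_apply_apply] at this
    exact this.symm
  have hkh : ∀ y, k (h y) = y := by
    intro y
    refine rel_unique e.symm hB.singleton_zero (hRelk (h y)) ?_
    intro g
    have := hRel y (e.symm g)
    rw [e.apply_symm_apply] at this
    exact this.symm
  have hhk : ∀ x, h (k x) = x := fun x =>
    rel_unique e hA.singleton_zero (hRel (k x)) (hRelk' x)
  have conth : Continuous h :=
    cont_of_rel hA.smul_mem hA.nonvanishing hA.completely_regular hB.cont_mem e h hRel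
  have contk : Continuous k :=
    cont_of_rel hB.smul_mem hB.nonvanishing hB.completely_regular hA.cont_mem e.symm k hRelk
  have Hhomeo : IsHomeomorph h := by
    let H : Y ≃ₜ X :=
      { toFun := h, invFun := k, left_inv := hkh, right_inv := hhk,
        continuous_toFun := conth, continuous_invFun := contk }
    exact H.isHomeomorph
  refine ⟨h, Hhomeo, fun y => ?_⟩
  set Ψ : A →ₗ[𝕜] E := (LinearMap.proj (h y)).comp A.subtype with hΨ
  set Φ : A →ₗ[𝕜] F := ((LinearMap.proj y).comp B.subtype).comp (e : A →ₗ[𝕜] B) with hΦ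
  have hΨr : LinearMap.range Ψ = A.map (LinearMap.proj (h y) : (X → E) →ₗ[𝕜] E) := by
    rw [hΨ, LinearMap.range_comp, Submodule.range_subtype]
  have hΦr : LinearMap.range Φ = B.map (LinearMap.proj y : (Y → F) →ₗ[𝕜] F) := by
    rw [hΦ, LinearMap.range_comp, LinearEquiv.range, Submodule.map_top, LinearMap.range_comp,
      Submodule.range_subtype]
  have hker : LinearMap.ker Ψ = LinearMap.ker Φ := by
    ext f
    simp only [hΨ, hΦ, LinearMap.mem_ker, LinearMap.comp_apply, LinearEquiv.coe_coe,
      Submodule.coe_subtype, LinearMap.proj_apply]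
    exact hRel y f
  refine ⟨(LinearEquiv.ofEq _ _ hΨr.symm).trans ((Ψ.quotKerEquivRange.symm).trans
    ((Submodule.quotEquivOfEq _ _ hker).trans ((Φ.quotKerEquivRange).trans
    (LinearEquiv.ofEq _ _ hΦr)))), fun f => ?_⟩
  have h1 : (LinearEquiv.ofEq _ _ hΨr.symm) ⟨(f : X → E) (h y), Submodule.mem_map_of_mem f.2⟩
      = ⟨Ψ f, LinearMap.mem_range_self Ψ f⟩ := by
    apply Subtype.ext
    simp [hΨ]
  simp only [LinearEquiv.trans_apply, h1,
    Ψ.quotKerEquivRange_symm_apply_image f (LinearMap.mem_range_self Ψ f),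
    Submodule.mkQ_apply, Submodule.quotEquivOfEq_mk]
  rw [LinearEquiv.coe_ofEq_apply]
  simp [hΦ, he]
end

section
/- Let T : A(X,E) → A(Y,F) be a linear bijection preserving common zeros between subspaces satisfying the standing properties. Then T is biseparating: both T and T⁻¹ are separating, i.e., coz(f) ∩ coz(g) = ∅ implies coz(Tf) ∩ coz(Tg) = ∅ for all f, g ∈ A(X,E), and the analogous statement holds for T⁻¹. -/
open Set

theorem stmt9 {𝕜 X Y E F : Type*} [RCLike 𝕜] [MetricSpace X] [MetricSpace Y]
    [NormedAddCommGroup E] [NormedSpace 𝕜 E] [NormedAddCommGroup F] [NormedSpace 𝕜 F]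
    (A : Submodule 𝕜 (X → E)) (RX : Subring (X → 𝕜))
    (B : Submodule 𝕜 (Y → F)) (RY : Subring (Y → 𝕜))
    (hA : StandingProps 𝕜 A RX) (hB : StandingProps 𝕜 B RY)
    (T : A →ₗ[𝕜] B) (hbij : Function.Bijective T)
    (hpcz : ∀ f g : A, (Zset (f : X → E) ∩ Zset (g : X → E)).Nonempty ↔
      (Zset ((T f : B) : Y → F) ∩ Zset ((T g : B) : Y → F)).Nonempty) :
    (∀ f g : A, Coz (f : X → E) ∩ Coz (g : X → E) = ∅ →
        Coz ((T f : B) : Y → F) ∩ Coz ((T g : B) : Y → F) = ∅) ∧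
    (∀ f g : A, Coz ((T f : B) : Y → F) ∩ Coz ((T g : B) : Y → F) = ∅ →
        Coz (f : X → E) ∩ Coz (g : X → E) = ∅) := by
  constructor
  · intro f g hcoz
    by_contra hne
    rw [← ne_eq, ← Set.nonempty_iff_ne_empty] at hne
    obtain ⟨y₀, hyf, hyg⟩ := hne
    obtain ⟨k, hkB, hk⟩ := hB.singleton_zero y₀
    obtain ⟨u, hu⟩ := hbij.2 ⟨k, hkB⟩
    have hTu : Zset ((T u : B) : Y → F) = {y₀} := by rw [hu]; exact hk
    have hZu : (Zset (u : X → E)).Nonempty := by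
      rw [show Zset (u : X → E) = Zset (u : X → E) ∩ Zset (u : X → E) from
        (Set.inter_self _).symm]
      exact (hpcz u u).2 (by rw [hTu, Set.inter_self]; exact ⟨y₀, rfl⟩)
    obtain ⟨x₀, hx₀⟩ := hZu
    have key : ∀ v : A, ((T v : B) : Y → F) y₀ ≠ 0 → (v : X → E) x₀ ≠ 0 := by
      intro v hv hvx
      have : (Zset ((T u : B) : Y → F) ∩ Zset ((T v : B) : Y → F)).Nonempty :=
        (hpcz u v).1 ⟨x₀, hx₀, hvx⟩
      obtain ⟨y, hy1, hy2⟩ := this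
      rw [hTu] at hy1
      exact hv (hy1 ▸ hy2)
    have : x₀ ∈ Coz (f : X → E) ∩ Coz (g : X → E) := ⟨key f hyf, key g hyg⟩
    rw [hcoz] at this
    exact this
  · intro f g hcoz
    by_contra hne
    rw [← ne_eq, ← Set.nonempty_iff_ne_empty] at hne
    obtain ⟨x₀, hxf, hxg⟩ := hne
    obtain ⟨u, huA, hu⟩ := hA.singleton_zero x₀
    have hZTu : (Zset ((T ⟨u, huA⟩ : B) : Y → F)).Nonempty := by
      rw [show Zset ((T ⟨u, huA⟩ : B) : Y → F)
          = Zset ((T ⟨u, huA⟩ : B) : Y → F) ∩ Zset ((T ⟨u, huA⟩ : B) : Y → F) from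
        (Set.inter_self _).symm]
      exact (hpcz ⟨u, huA⟩ ⟨u, huA⟩).1 (by rw [Set.inter_self, hu]; exact ⟨x₀, rfl⟩)
    obtain ⟨y₀, hy₀⟩ := hZTu
    have key : ∀ v : A, (v : X → E) x₀ ≠ 0 → ((T v : B) : Y → F) y₀ ≠ 0 := by
      intro v hv hvy
      have : (Zset ((u : X → E)) ∩ Zset (v : X → E)).Nonempty :=
        (hpcz ⟨u, huA⟩ v).2 ⟨y₀, hy₀, hvy⟩
      obtain ⟨x, hx1, hx2⟩ := this
      rw [hu] at hx1
      exact hv (hx1 ▸ hx2)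
    have : y₀ ∈ Coz ((T f : B) : Y → F) ∩ Coz ((T g : B) : Y → F) :=
      ⟨key f hxf, key g hxg⟩
    rw [hcoz] at this
    exact this
end

section
/- Let T : A(X,E) → A(Y,F) be a linear bijection preserving common zeros between subspaces satisfying the standing properties, with induced map k : X → Y (sending x to the unique zero of Tf when Z(f) = {x}). Then k is continuous. -/
open Set

theorem stmt10 {𝕜 X Y E F : Type*} [RCLike 𝕜] [MetricSpace X] [MetricSpace Y]
    [NormedAddCommGroup E] [NormedSpace 𝕜 E] [NormedAddCommGroup F] [NormedSpace 𝕜 F]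
    (A : Submodule 𝕜 (X → E)) (RX : Subring (X → 𝕜))
    (B : Submodule 𝕜 (Y → F)) (RY : Subring (Y → 𝕜))
    (hA : StandingProps 𝕜 A RX) (hB : StandingProps 𝕜 B RY)
    (T : A →ₗ[𝕜] B) (hbij : Function.Bijective T)
    (hpcz : ∀ f g : A, (Zset (f : X → E) ∩ Zset (g : X → E)).Nonempty ↔
      (Zset ((T f : B) : Y → F) ∩ Zset ((T g : B) : Y → F)).Nonempty)
    (k : X → Y)
    (hk : ∀ (x : X) (f : A), Zset (f : X → E) = {x} →
      Zset ((T f : B) : Y → F) = {k x}) :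
    Continuous k := by
  have key : ∀ (f : A) (x : X), (f : X → E) x = 0 ↔ ((T f : B) : Y → F) (k x) = 0 := by
    intro f x
    obtain ⟨g, hgA, hgZ⟩ := hA.singleton_zero x
    have h1 := hpcz f ⟨g, hgA⟩
    have h2 := hk x ⟨g, hgA⟩ hgZ
    rw [show Zset (((⟨g, hgA⟩ : A) : X → E)) = {x} from hgZ,
      Set.inter_singleton_nonempty, h2, Set.inter_singleton_nonempty] at h1
    simpa [Zset] using h1
  rw [Metric.continuous_iff]
  intro x₀ ε hε
  obtain ⟨u, huB, hu⟩ := hB.nonvanishing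
  obtain ⟨φ, hφR, hφ1, hφ0⟩ := hB.completely_regular (k x₀) (Metric.ball (k x₀) ε)ᶜ
    (isClosed_compl_iff.mpr Metric.isOpen_ball) (by simp [Metric.mem_ball, hε])
  have hgB : (fun y => φ y • u y) ∈ B := hB.smul_mem φ hφR u huB
  obtain ⟨f, hf⟩ := hbij.2 ⟨_, hgB⟩
  have hTf : ((T f : B) : Y → F) = fun y => φ y • u y := by rw [hf]
  have hfx₀ : (f : X → E) x₀ ≠ 0 := by
    intro h
    have h' := (key f x₀).1 h
    rw [hTf] at h'
    simp only [hφ1, one_smul] at h'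
    exact hu _ h'
  have hopen : IsOpen {x | (f : X → E) x ≠ 0} :=
    isOpen_compl_iff.mpr (isClosed_singleton.preimage (hA.cont_mem f f.2))
  obtain ⟨δ, hδ, hball⟩ := Metric.isOpen_iff.1 hopen x₀ hfx₀
  refine ⟨δ, hδ, fun a ha => ?_⟩
  have hfa : (f : X → E) a ≠ 0 := hball (Metric.mem_ball.mpr ha)
  have hTfa : ((T f : B) : Y → F) (k a) ≠ 0 := fun h => hfa ((key f a).2 h)
  rw [hTf] at hTfa
  have hφa : φ (k a) ≠ 0 := fun h => hTfa (by simp [h])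
  by_contra hcon
  exact hφa (hφ0 _ (by simpa [Metric.mem_ball] using hcon))
end

section
/- Let X be a metric space, E a normed space, A(X,E) ⊆ C(X,E) a vector subspace and A(X) ⊆ C(X) a subring satisfying the standing properties, and similarly for Y, F. Suppose T : A(X,E) → A(Y,F) is a linear bijection preserving common zeros. If g₁, g₂ ∈ A(Y,F) satisfy g₁ + g₂ = Φ_Y for a nowhere-vanishing Φ_Y ∈ A(Y,F), then there is no x₀ ∈ X with T⁻¹g₁(x₀) = 0 and T⁻¹g₂(x₀) = 0. -/
open Set

theorem stmt11 {𝕜 X Y E F : Type*} [RCLike 𝕜] [MetricSpace X] [MetricSpace Y]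
    [NormedAddCommGroup E] [NormedSpace 𝕜 E] [NormedAddCommGroup F] [NormedSpace 𝕜 F]
    (A : Submodule 𝕜 (X → E)) (RX : Subring (X → 𝕜))
    (B : Submodule 𝕜 (Y → F)) (RY : Subring (Y → 𝕜))
    (hA : StandingProps 𝕜 A RX) (hB : StandingProps 𝕜 B RY)
    (T : A →ₗ[𝕜] B) (hbij : Function.Bijective T)
    (hpcz : ∀ f g : A, (Zset (f : X → E) ∩ Zset (g : X → E)).Nonempty ↔
      (Zset ((T f : B) : Y → F) ∩ Zset ((T g : B) : Y → F)).Nonempty)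
    (Φ : B) (hΦ : ∀ y : Y, (Φ : Y → F) y ≠ 0)
    (g₁ g₂ : B) (hsum : g₁ + g₂ = Φ)
    (f₁ f₂ : A) (hf₁ : T f₁ = g₁) (hf₂ : T f₂ = g₂) :
    ¬ ∃ x₀ : X, (f₁ : X → E) x₀ = 0 ∧ (f₂ : X → E) x₀ = 0 := by
  rintro ⟨x₀, h1, h2⟩
  have hT : T (f₁ + f₂) = Φ := by rw [map_add, hf₁, hf₂, hsum]
  have hne : (Zset ((f₁ + f₂ : A) : X → E) ∩ Zset ((f₁ + f₂ : A) : X → E)).Nonempty := by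
    refine ⟨x₀, ?_, ?_⟩ <;> simp [Zset, h1, h2]
  rw [hpcz, hT] at hne
  obtain ⟨y, hy, -⟩ := hne
  exact hΦ y hy
end

section
/- Let X = Y = ℕ with the discrete metric, E = F = 𝕂³. Fix for each n subspaces E^{2n−1}, E^{2n} ⊆ E with dim E^{2n−1} = 1, dim E^{2n} = 2, and F^{2n−1}, F^{2n} ⊆ F with dim F^{2n−1} = 2, dim F^{2n} = 1. Define A(X,E) = {f ∈ C(X,E) : f(2n−1) ∈ E^{2n−1}, f(2n) ∈ E^{2n} for all n} and A(Y,F) analogously. If T : A(X,E) → A(Y,F) is a linear bijection preserving common zeros with induced homeomorphism h : Y → X, then h maps odd numbers to even numbers and even numbers to odd numbers. -/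
open Set

theorem stmt17 {𝕜 : Type*} [RCLike 𝕜]
    (Esub Fsub : ℕ → Submodule 𝕜 (Fin 3 → 𝕜))
    (hEdim : ∀ n : ℕ, Module.finrank 𝕜 (Esub n) = if Odd n then 1 else 2)
    (hFdim : ∀ n : ℕ, Module.finrank 𝕜 (Fsub n) = if Odd n then 2 else 1)
    (A : Submodule 𝕜 (ℕ → (Fin 3 → 𝕜)))
    (hAmem : ∀ f : ℕ → (Fin 3 → 𝕜), f ∈ A ↔ ∀ n : ℕ, f n ∈ Esub n)
    (B : Submodule 𝕜 (ℕ → (Fin 3 → 𝕜)))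
    (hBmem : ∀ g : ℕ → (Fin 3 → 𝕜), g ∈ B ↔ ∀ n : ℕ, g n ∈ Fsub n)
    (T : A →ₗ[𝕜] B) (hbij : Function.Bijective T)
    (hpcz : ∀ f g : A, (Zset (f : ℕ → (Fin 3 → 𝕜)) ∩ Zset (g : ℕ → (Fin 3 → 𝕜))).Nonempty ↔
      (Zset ((T f : B) : ℕ → (Fin 3 → 𝕜)) ∩ Zset ((T g : B) : ℕ → (Fin 3 → 𝕜))).Nonempty)
    (h : ℕ → ℕ)
    (hh : ∀ (y : ℕ) (g : B) (f : A), T f = g → Zset (g : ℕ → (Fin 3 → 𝕜)) = {y} →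
      Zset (f : ℕ → (Fin 3 → 𝕜)) = {h y}) :
    ∀ y : ℕ, (Odd y → Even (h y)) ∧ (Even y → Odd (h y)) := by

  intro y
  -- nonzero vectors in each `Fsub n`
  have hFne : ∀ n, ∃ v : Fin 3 → 𝕜, v ∈ Fsub n ∧ v ≠ 0 := by
    intro n
    apply Submodule.exists_mem_ne_zero_of_ne_bot
    intro hbot
    have hd := hFdim n
    rw [hbot, finrank_bot] at hd
    split at hd <;> omega
  choose v hvmem hvne using hFne
  -- a function in B whose zero set is exactly {y}
  set gfun : ℕ → Fin 3 → 𝕜 := fun n => if n = y then 0 else v n with hgfun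
  have hgB : gfun ∈ B := by
    rw [hBmem]; intro n
    by_cases hn : n = y <;> simp [gfun, hn, hvmem, Submodule.zero_mem]
  have hZg : Zset gfun = {y} := by
    ext n
    by_cases hn : n = y <;> simp [Zset, gfun, hn, hvne n]
  obtain ⟨f₀, hf₀⟩ := hbij.2 ⟨gfun, hgB⟩
  have hZf₀ : Zset (f₀ : ℕ → Fin 3 → 𝕜) = {h y} := hh y ⟨gfun, hgB⟩ f₀ hf₀ hZg
  -- the key pointwise equivalence
  have key : ∀ f : A, (f : ℕ → Fin 3 → 𝕜) (h y) = 0 ↔ ((T f : B) : ℕ → Fin 3 → 𝕜) y = 0 := by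
    intro f
    have h1 := hpcz f f₀
    rw [hZf₀, hf₀] at h1
    have h2 : Zset ((⟨gfun, hgB⟩ : B) : ℕ → Fin 3 → 𝕜) = {y} := hZg
    rw [h2] at h1
    simpa [Set.inter_singleton_nonempty, Zset] using h1
  -- two surjective linear maps with equal kernels
  let Φ : A →ₗ[𝕜] Fsub y :=
    { toFun := fun f => ⟨((T f : B) : ℕ → Fin 3 → 𝕜) y, ((hBmem _).1 (T f).2) y⟩
      map_add' := by intro f g; ext i; simp
      map_smul' := by intro c f; ext i; simp }
  let Ψ : A →ₗ[𝕜] Esub (h y) :=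
    { toFun := fun f => ⟨(f : ℕ → Fin 3 → 𝕜) (h y), ((hAmem _).1 f.2) (h y)⟩
      map_add' := by intro f g; ext i; simp
      map_smul' := by intro c f; ext i; simp }
  have hker : LinearMap.ker Φ = LinearMap.ker Ψ := by
    ext f
    simp only [LinearMap.mem_ker, LinearMap.coe_mk, AddHom.coe_mk, Φ, Ψ,
      Submodule.mk_eq_zero]
    exact (key f).symm
  have hΨsurj : Function.Surjective Ψ := by
    rintro ⟨w, hw⟩
    refine ⟨⟨fun n => if n = h y then w else 0, ?_⟩, ?_⟩
    · rw [hAmem]; intro n; by_cases hn : n = h y <;> simp [hn, hw]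
    · apply Subtype.ext; simp [Ψ]
  have hΦsurj : Function.Surjective Φ := by
    rintro ⟨w, hw⟩
    have hgw : (fun n => if n = y then w else 0) ∈ B := by
      rw [hBmem]; intro n; by_cases hn : n = y <;> simp [hn, hw]
    obtain ⟨f, hf⟩ := hbij.2 ⟨_, hgw⟩
    refine ⟨f, ?_⟩
    apply Subtype.ext
    simp [Φ, hf]
  -- equal finranks
  have hdim : Module.finrank 𝕜 (Esub (h y)) = Module.finrank 𝕜 (Fsub y) := by
    have e1 := Φ.quotKerEquivOfSurjective hΦsurj
    have e2 := Ψ.quotKerEquivOfSurjective hΨsurj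
    rw [hker] at e1
    exact (e2.symm.trans e1).finrank_eq
  have hE := hEdim (h y)
  have hF := hFdim y
  constructor
  · intro hy
    rw [if_pos hy] at hF
    rw [← Nat.not_odd_iff_even]
    intro hodd
    rw [if_pos hodd] at hE
    omega
  · intro hy
    rw [if_neg (by simpa [Nat.not_odd_iff_even] using hy)] at hF
    by_contra hnodd
    rw [Nat.not_odd_iff_even] at hnodd
    rw [if_neg (by simpa [Nat.not_odd_iff_even] using hnodd)] at hE
    omega
end
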